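/- Fix an integer n ≥ 2. Let m, b_1, …, b_n : ℝ³ → ℝ be smooth functions of (x, y, t) satisfying m_y = (m b_1)_x + m b_{1,x}; (1/2)(b_{1,xxx} − b_{1,x}) = −(1/2) m_x; (1/2)(b_{j,xxx} − b_{j,x}) = (m b_{j−1})_x + m b_{j−1,x} for every 2 ≤ j ≤ n; and m_t = (m b_n)_x + m b_{n,x} (so that m solves the (2+1)-dimensional CH hierarchy). Then for every real λ ≠ 0 the Lax triad compatibility conditions hold pointwise on ℝ³: U_y − (V¹)_x + U V¹ − V¹ U = 0 and U_t − (Vⁿ)_x + U Vⁿ − Vⁿ U = 0, where V¹ = −(1/2) U + Ṽ[b_1] and Vⁿ = −(1/2) U + Σ_{j=1}^{n} λ^{j−n} Ṽ[b_j]. -/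

import Mathlib

open Matrix Finset

/-- Partial derivative in the first (x) variable. -/
noncomputable def dX3 (f : ℝ → ℝ → ℝ → ℝ) : ℝ → ℝ → ℝ → ℝ :=
  fun x y t => deriv (fun x' => f x' y t) x

/-- Partial derivative in the second (y) variable. -/
noncomputable def dY3 (f : ℝ → ℝ → ℝ → ℝ) : ℝ → ℝ → ℝ → ℝ :=
  fun x y t => deriv (fun y' => f x y' t) y

/-- Partial derivative in the third (t) variable. -/
noncomputable def dT3 (f : ℝ → ℝ → ℝ → ℝ) : ℝ → ℝ → ℝ → ℝ :=
  fun x y t => deriv (fun t' => f x y t') t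

/-- Smoothness of a function of three real variables. -/
def Smooth3 (f : ℝ → ℝ → ℝ → ℝ) : Prop :=
  ContDiff ℝ (⊤ : ℕ∞) (fun p : ℝ × ℝ × ℝ => f p.1 p.2.1 p.2.2)

/-- Entrywise partial derivative in x of a matrix-valued function on ℝ³. -/
noncomputable def mdX3 (M : ℝ → ℝ → ℝ → Matrix (Fin 2) (Fin 2) ℝ) :
    ℝ → ℝ → ℝ → Matrix (Fin 2) (Fin 2) ℝ :=
  fun x y t => Matrix.of fun i j => deriv (fun x' => M x' y t i j) x

/-- Entrywise partial derivative in y of a matrix-valued function on ℝ³. -/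
noncomputable def mdY3 (M : ℝ → ℝ → ℝ → Matrix (Fin 2) (Fin 2) ℝ) :
    ℝ → ℝ → ℝ → Matrix (Fin 2) (Fin 2) ℝ :=
  fun x y t => Matrix.of fun i j => deriv (fun y' => M x y' t i j) y

/-- Entrywise partial derivative in t of a matrix-valued function on ℝ³. -/
noncomputable def mdT3 (M : ℝ → ℝ → ℝ → Matrix (Fin 2) (Fin 2) ℝ) :
    ℝ → ℝ → ℝ → Matrix (Fin 2) (Fin 2) ℝ :=
  fun x y t => Matrix.of fun i j => deriv (fun t' => M x y t' i j) t

/-- The CH spatial Lax matrix U(λ) = [[0, 1], [1/4 + λ m, 0]] (on ℝ³). -/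
noncomputable def CHU3 (lam : ℝ) (m : ℝ → ℝ → ℝ → ℝ) : ℝ → ℝ → ℝ → Matrix (Fin 2) (Fin 2) ℝ :=
  fun x y t => !![0, 1; 1/4 + lam * m x y t, 0]

/-- The matrix Ṽ[b](λ) of the CH hierarchy (on ℝ³). -/
noncomputable def CHVt3 (lam : ℝ) (m b : ℝ → ℝ → ℝ → ℝ) : ℝ → ℝ → ℝ → Matrix (Fin 2) (Fin 2) ℝ :=
  fun x y t =>
    !![-(1/2) * dX3 b x y t, b x y t + 1/2 - 1/(2*lam);
       lam * m x y t * (b x y t + 1/2) - (1/2) * dX3 (dX3 b) x y t + (1/4) * (b x y t + 1/2)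
         - (1/2) * m x y t - 1/(8*lam),
       (1/2) * dX3 b x y t]

lemma smoothX {f : ℝ → ℝ → ℝ → ℝ} (hf : Smooth3 f) (y t : ℝ) :
    ContDiff ℝ ((⊤:ℕ∞):WithTop ℕ∞) (fun x => f x y t) :=
  (hf.comp (contDiff_id.prodMk (contDiff_const.prodMk contDiff_const))).of_le (by simp)

lemma smoothY {f : ℝ → ℝ → ℝ → ℝ} (hf : Smooth3 f) (x t : ℝ) :
    ContDiff ℝ ((⊤:ℕ∞):WithTop ℕ∞) (fun y => f x y t) :=
  (hf.comp (contDiff_const.prodMk (contDiff_id.prodMk contDiff_const))).of_le (by simp)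

lemma smoothT {f : ℝ → ℝ → ℝ → ℝ} (hf : Smooth3 f) (x y : ℝ) :
    ContDiff ℝ ((⊤:ℕ∞):WithTop ℕ∞) (fun t => f x y t) :=
  (hf.comp (contDiff_const.prodMk (contDiff_const.prodMk contDiff_id))).of_le (by simp)

lemma cd_deriv {f : ℝ → ℝ} (hf : ContDiff ℝ ((⊤:ℕ∞):WithTop ℕ∞) f) :
    ContDiff ℝ ((⊤:ℕ∞):WithTop ℕ∞) (deriv f) :=
  (contDiff_infty_iff_deriv.mp hf).2

lemma cd_diff {f : ℝ → ℝ} (hf : ContDiff ℝ ((⊤:ℕ∞):WithTop ℕ∞) f) : Differentiable ℝ f :=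
  hf.differentiable (by simp)

/-- derivative of the (1,0)-entry of Ṽ[b], as a 1D statement. -/
lemma hasDerivAt_centry (lam c : ℝ) {M B : ℝ → ℝ} (hM : Differentiable ℝ M)
    (hB : Differentiable ℝ B) (hB2 : Differentiable ℝ (deriv (deriv B))) (x : ℝ) :
    HasDerivAt (fun x' => lam * M x' * (B x' + 1/2) - (1/2) * deriv (deriv B) x'
        + (1/4) * (B x' + 1/2) - (1/2) * M x' - c)
      (lam * deriv M x * (B x + 1/2) + lam * M x * deriv B x
        - (1/2) * deriv (deriv (deriv B)) x + (1/4) * deriv B x - (1/2) * deriv M x) x := by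
  have h1 : HasDerivAt (fun x' => lam * M x') (lam * deriv M x) x :=
    ((hM x).hasDerivAt).const_mul lam
  have h2 : HasDerivAt (fun x' => B x' + 1/2) (deriv B x) x := by
    simpa using ((hB x).hasDerivAt).add_const (1/2 : ℝ)
  have h3 := h1.fun_mul h2
  have h4 : HasDerivAt (fun x' => (1/2) * deriv (deriv B) x')
      ((1/2) * deriv (deriv (deriv B)) x) x := ((hB2 x).hasDerivAt).const_mul _
  have h5 : HasDerivAt (fun x' => (1/4) * (B x' + 1/2)) ((1/4) * deriv B x) x :=
    h2.const_mul _
  have h6 : HasDerivAt (fun x' => (1/2) * M x') ((1/2) * deriv M x) x :=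
    ((hM x).hasDerivAt).const_mul _
  have := (((h3.fun_sub h4).fun_add h5).fun_sub h6).sub_const c
  convert this using 1 <;> ring

/-- the (2+1)-dimensional CH hierarchy possesses the Lax triad
U, V¹ = −(1/2)U + Ṽ[b₁], Vⁿ = −(1/2)U + Σ_{j=1}^n λ^{j−n} Ṽ[b_j]. -/
theorem twoDCH_hierarchy_Lax_triad
    (n : ℕ) (hn : 2 ≤ n) (m : ℝ → ℝ → ℝ → ℝ) (b : ℕ → ℝ → ℝ → ℝ → ℝ)
    (hm : Smooth3 m) (hb : ∀ j, 1 ≤ j → j ≤ n → Smooth3 (b j))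
    (hy : ∀ x y t, dY3 m x y t
        = dX3 (fun x y t => m x y t * b 1 x y t) x y t + m x y t * dX3 (b 1) x y t)
    (h1 : ∀ x y t, (1/2) * (dX3 (dX3 (dX3 (b 1))) x y t - dX3 (b 1) x y t)
        = -(1/2) * dX3 m x y t)
    (hrec : ∀ j, 2 ≤ j → j ≤ n → ∀ x y t,
      (1/2) * (dX3 (dX3 (dX3 (b j))) x y t - dX3 (b j) x y t)
        = dX3 (fun x y t => m x y t * b (j-1) x y t) x y t + m x y t * dX3 (b (j-1)) x y t)
    (ht : ∀ x y t, dT3 m x y t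
        = dX3 (fun x y t => m x y t * b n x y t) x y t + m x y t * dX3 (b n) x y t)
    (lam : ℝ) (hlam : lam ≠ 0) :
    (∀ x y t,
      mdY3 (CHU3 lam m) x y t
        - mdX3 (fun x y t => (-(1/2) : ℝ) • CHU3 lam m x y t + CHVt3 lam m (b 1) x y t) x y t
        + CHU3 lam m x y t * ((-(1/2) : ℝ) • CHU3 lam m x y t + CHVt3 lam m (b 1) x y t)
        - ((-(1/2) : ℝ) • CHU3 lam m x y t + CHVt3 lam m (b 1) x y t) * CHU3 lam m x y t
      = 0)
    ∧ (∀ x y t,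
      mdT3 (CHU3 lam m) x y t
        - mdX3 (fun x y t => (-(1/2) : ℝ) • CHU3 lam m x y t
            + ∑ j ∈ Finset.Icc 1 n, lam ^ ((j : ℤ) - (n : ℤ)) • CHVt3 lam m (b j) x y t) x y t
        + CHU3 lam m x y t *
            ((-(1/2) : ℝ) • CHU3 lam m x y t
              + ∑ j ∈ Finset.Icc 1 n, lam ^ ((j : ℤ) - (n : ℤ)) • CHVt3 lam m (b j) x y t)
        - ((-(1/2) : ℝ) • CHU3 lam m x y t
              + ∑ j ∈ Finset.Icc 1 n, lam ^ ((j : ℤ) - (n : ℤ)) • CHVt3 lam m (b j) x y t) *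
            CHU3 lam m x y t
      = 0) := by
  constructor
  · -- first Lax equation
    intro x y t
    have hMc := smoothX hm y t
    have hMd : Differentiable ℝ (fun x' => m x' y t) := cd_diff hMc
    have hBc := smoothX (hb 1 le_rfl (by omega)) y t
    have hBd : Differentiable ℝ (fun x' => b 1 x' y t) := cd_diff hBc
    have hB1d : Differentiable ℝ (deriv (fun x' => b 1 x' y t)) := cd_diff (cd_deriv hBc)
    have hB2d : Differentiable ℝ (deriv (deriv (fun x' => b 1 x' y t))) :=
      cd_diff (cd_deriv (cd_deriv hBc))
    have hprod1 : deriv (fun x' => m x' y t * b 1 x' y t) x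
        = deriv (fun x'' => m x'' y t) x * b 1 x y t
          + m x y t * deriv (fun x'' => b 1 x'' y t) x :=
      ((hMd x).hasDerivAt.mul (hBd x).hasDerivAt).deriv
    have hy' := hy x y t
    simp only [dY3, dX3] at hy'
    rw [hprod1] at hy'
    have h1' := h1 x y t
    simp only [dX3] at h1'
    ext i j
    fin_cases i <;> fin_cases j <;>
      simp only [mdY3, mdX3, CHU3, CHVt3, dX3, Matrix.sub_apply, Matrix.add_apply,
        Matrix.smul_apply, smul_eq_mul, Matrix.mul_apply, Fin.sum_univ_two, Matrix.of_apply,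
        Matrix.cons_val', Matrix.cons_val_zero, Matrix.cons_val_one, Matrix.head_cons,
        Matrix.head_fin_const, Matrix.empty_val', Matrix.cons_val_fin_one, Matrix.zero_apply,
        Fin.isValue, Fin.mk_zero, Fin.mk_one, mul_zero, zero_mul, zero_add, add_zero, mul_one,
        one_mul, neg_zero, sub_zero, deriv_const']
    · -- (0,0)
      have e1 : deriv (fun x' => -(1/2) * deriv (fun x'' => b 1 x'' y t) x') x
          = -(1/2) * deriv (deriv (fun x'' => b 1 x'' y t)) x :=
        ((hB1d x).hasDerivAt.const_mul _).deriv
      rw [e1]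
      field_simp
      ring
    · -- (0,1)
      have e2 : deriv (fun x' => -(1/2) + (b 1 x' y t + 1/2 - 1/(2*lam))) x
          = deriv (fun x'' => b 1 x'' y t) x :=
        ((((hBd x).hasDerivAt.add_const (1/2:ℝ)).sub_const (1/(2*lam))).const_add
          (-(1/2):ℝ)).deriv
      rw [e2]
      ring
    · -- (1,0)
      have ey : deriv (fun y' => 1 / 4 + lam * m x y' t) y
          = lam * deriv (fun y' => m x y' t) y :=
        ((((cd_diff (smoothY hm x t)) y).hasDerivAt.const_mul lam).const_add (1/4:ℝ)).deriv
      have e3 : deriv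
            (fun x' =>
              -(1 / 2) * (1 / 4 + lam * m x' y t) +
                (lam * m x' y t * (b 1 x' y t + 1 / 2) -
                      1 / 2 * deriv (fun x' => deriv (fun x' => b 1 x' y t) x') x' +
                      1 / 4 * (b 1 x' y t + 1 / 2) -
                    1 / 2 * m x' y t -
                  1 / (8 * lam))) x
          = -(1/2) * (lam * deriv (fun x'' => m x'' y t) x)
            + (lam * deriv (fun x'' => m x'' y t) x * (b 1 x y t + 1/2)
               + lam * m x y t * deriv (fun x'' => b 1 x'' y t) x
               - (1/2) * deriv (deriv (deriv (fun x'' => b 1 x'' y t))) x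
               + (1/4) * deriv (fun x'' => b 1 x'' y t) x
               - (1/2) * deriv (fun x'' => m x'' y t) x) := by
        exact (((((hMd x).hasDerivAt.const_mul lam).const_add (1/4:ℝ)).const_mul
            (-(1/2):ℝ)).add (hasDerivAt_centry lam (1/(8*lam)) hMd hBd hB2d x)).deriv
      rw [ey, e3]
      linear_combination lam * hy' + h1'
    · -- (1,1)
      have e4 : deriv (fun x' => 1/2 * deriv (fun x'' => b 1 x'' y t) x') x
          = 1/2 * deriv (deriv (fun x'' => b 1 x'' y t)) x :=
        ((hB1d x).hasDerivAt.const_mul _).deriv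
      rw [e4]
      field_simp
      ring
  · -- second Lax equation
    intro x y t
    have hMc := smoothX hm y t
    have hMd : Differentiable ℝ (fun x' => m x' y t) := cd_diff hMc
    have hBc : ∀ j ∈ Finset.Icc 1 n, ContDiff ℝ ((⊤:ℕ∞):WithTop ℕ∞) (fun x' => b j x' y t) :=
      fun j hj => smoothX (hb j (Finset.mem_Icc.mp hj).1 (Finset.mem_Icc.mp hj).2) y t
    have hBd : ∀ j ∈ Finset.Icc 1 n, Differentiable ℝ (fun x' => b j x' y t) :=
      fun j hj => cd_diff (hBc j hj)
    have hB1d : ∀ j ∈ Finset.Icc 1 n, Differentiable ℝ (deriv (fun x' => b j x' y t)) :=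
      fun j hj => cd_diff (cd_deriv (hBc j hj))
    have hB2d : ∀ j ∈ Finset.Icc 1 n, Differentiable ℝ (deriv (deriv (fun x' => b j x' y t))) :=
      fun j hj => cd_diff (cd_deriv (cd_deriv (hBc j hj)))
    have hprod : ∀ j ∈ Finset.Icc 1 n, ∀ x : ℝ,
        deriv (fun x' => m x' y t * b j x' y t) x
        = deriv (fun x'' => m x'' y t) x * b j x y t
          + m x y t * deriv (fun x'' => b j x'' y t) x :=
      fun j hj x => ((hMd x).hasDerivAt.mul ((hBd j hj) x).hasDerivAt).deriv
    have hnmem : n ∈ Finset.Icc 1 n := Finset.mem_Icc.mpr ⟨by omega, le_rfl⟩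
    have ht' := ht x y t
    simp only [dT3, dX3] at ht'
    rw [hprod n hnmem x] at ht'
    ext i j
    fin_cases i <;> fin_cases j <;>
      simp only [mdT3, mdX3, CHU3, CHVt3, dX3, Matrix.sub_apply, Matrix.add_apply,
        Matrix.smul_apply, smul_eq_mul, Matrix.mul_apply, Fin.sum_univ_two, Matrix.of_apply,
        Matrix.cons_val', Matrix.cons_val_zero, Matrix.cons_val_one, Matrix.head_cons,
        Matrix.head_fin_const, Matrix.empty_val', Matrix.cons_val_fin_one, Matrix.zero_apply,
        Fin.isValue, Fin.mk_zero, Fin.mk_one, mul_zero, zero_mul, zero_add, add_zero, mul_one,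
        one_mul, neg_zero, sub_zero, deriv_const', Matrix.sum_apply]
    · -- (0,0)
      have eD : deriv (fun x' => ∑ j ∈ Finset.Icc 1 n,
            lam ^ ((j:ℤ) - (n:ℤ)) * (-(1 / 2) * deriv (fun x' => b j x' y t) x')) x
          = ∑ j ∈ Finset.Icc 1 n,
            lam ^ ((j:ℤ) - (n:ℤ)) * (-(1 / 2) * deriv (deriv (fun x'' => b j x'' y t)) x) :=
        (HasDerivAt.fun_sum fun j hj =>
          (((hB1d j hj x).hasDerivAt.const_mul _).const_mul _)).deriv
      rw [eD]
      have h00 : (∑ j ∈ Finset.Icc 1 n,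
            lam ^ ((j:ℤ) - (n:ℤ)) * (b j x y t + 1 / 2 - 1 / (2 * lam))) * (1 / 4 + lam * m x y t)
          = (∑ j ∈ Finset.Icc 1 n,
              lam ^ ((j:ℤ) - (n:ℤ)) *
                (lam * m x y t * (b j x y t + 1 / 2) -
                      1 / 2 * deriv (fun x' => deriv (fun x' => b j x' y t) x') x +
                    1 / 4 * (b j x y t + 1 / 2) -
                  1 / 2 * m x y t -
                1 / (8 * lam)))
            - ∑ j ∈ Finset.Icc 1 n,
              lam ^ ((j:ℤ) - (n:ℤ)) * (-(1 / 2) * deriv (deriv (fun x'' => b j x'' y t)) x) := by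
        rw [Finset.sum_mul, ← Finset.sum_sub_distrib]
        refine Finset.sum_congr rfl fun j hj => ?_
        field_simp
        ring
      linear_combination -h00
    · -- (0,1)
      have eD : deriv (fun x' => -(1 / 2) + ∑ j ∈ Finset.Icc 1 n,
            lam ^ ((j:ℤ) - (n:ℤ)) * (b j x' y t + 1 / 2 - 1 / (2 * lam))) x
          = ∑ j ∈ Finset.Icc 1 n,
            lam ^ ((j:ℤ) - (n:ℤ)) * deriv (fun x'' => b j x'' y t) x :=
        ((HasDerivAt.fun_sum fun j hj =>
          ((((hBd j hj x).hasDerivAt.add_const (1/2:ℝ)).sub_const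
            (1/(2*lam))).const_mul _)).const_add (-(1/2):ℝ)).deriv
      rw [eD]
      have h01 : (∑ j ∈ Finset.Icc 1 n,
              lam ^ ((j:ℤ) - (n:ℤ)) * (1 / 2 * deriv (fun x' => b j x' y t) x))
            - ∑ j ∈ Finset.Icc 1 n,
              lam ^ ((j:ℤ) - (n:ℤ)) * (-(1 / 2) * deriv (fun x' => b j x' y t) x)
          = ∑ j ∈ Finset.Icc 1 n,
              lam ^ ((j:ℤ) - (n:ℤ)) * deriv (fun x'' => b j x'' y t) x := by
        rw [← Finset.sum_sub_distrib]
        exact Finset.sum_congr rfl fun j hj => by ring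
      linear_combination h01
    · -- (1,0)
      have eT : deriv (fun t' => 1 / 4 + lam * m x y t') t
          = lam * deriv (fun t' => m x y t') t :=
        ((((cd_diff (smoothT hm x y)) t).hasDerivAt.const_mul lam).const_add (1/4:ℝ)).deriv
      have eD : deriv
            (fun x' =>
              -(1 / 2) * (1 / 4 + lam * m x' y t) +
                ∑ j ∈ Finset.Icc 1 n,
                  lam ^ ((j:ℤ) - (n:ℤ)) *
                    (lam * m x' y t * (b j x' y t + 1 / 2) -
                            1 / 2 * deriv (fun x' => deriv (fun x' => b j x' y t) x') x' +
                          1 / 4 * (b j x' y t + 1 / 2) -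
                        1 / 2 * m x' y t -
                      1 / (8 * lam))) x
          = -(1/2) * (lam * deriv (fun x'' => m x'' y t) x)
            + ∑ j ∈ Finset.Icc 1 n,
              lam ^ ((j:ℤ) - (n:ℤ)) *
                (lam * deriv (fun x'' => m x'' y t) x * (b j x y t + 1/2)
                  + lam * m x y t * deriv (fun x'' => b j x'' y t) x
                  - (1/2) * deriv (deriv (deriv (fun x'' => b j x'' y t))) x
                  + (1/4) * deriv (fun x'' => b j x'' y t) x
                  - (1/2) * deriv (fun x'' => m x'' y t) x) := by
        exact (((((hMd x).hasDerivAt.const_mul lam).const_add (1/4:ℝ)).const_mul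
            (-(1/2):ℝ)).add (HasDerivAt.fun_sum fun j hj =>
              ((hasDerivAt_centry lam (1/(8*lam)) hMd (hBd j hj) (hB2d j hj) x).const_mul
                _))).deriv
      rw [eT, eD]
      -- telescoping sum
      set F : ℕ → ℝ := fun k => if k = 0 then 0 else
        lam ^ ((k:ℤ) + 1 - (n:ℤ)) *
          (deriv (fun x'' => m x'' y t) x * b k x y t
            + 2 * (m x y t * deriv (fun x'' => b k x'' y t) x)
            + (1/2) * deriv (fun x'' => m x'' y t) x) with hF
      have hstep : ∀ k : ℤ, lam ^ (k + 1 - (n:ℤ)) = lam ^ (k - (n:ℤ)) * lam := fun k => by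
        rw [show k + 1 - (n:ℤ) = (k - n) + 1 by ring, zpow_add_one₀ hlam]
      have htel : ∑ j ∈ Finset.Icc 1 n,
            (lam ^ ((j:ℤ) - (n:ℤ)) *
                (lam * deriv (fun x'' => m x'' y t) x * (b j x y t + 1/2)
                  + lam * m x y t * deriv (fun x'' => b j x'' y t) x
                  - (1/2) * deriv (deriv (deriv (fun x'' => b j x'' y t))) x
                  + (1/4) * deriv (fun x'' => b j x'' y t) x
                  - (1/2) * deriv (fun x'' => m x'' y t) x)
              + lam ^ ((j:ℤ) - (n:ℤ)) *
                ((1 / 4 + lam * m x y t) * deriv (fun x'' => b j x'' y t) x))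
          = lam * (deriv (fun x'' => m x'' y t) x * b n x y t
              + 2 * (m x y t * deriv (fun x'' => b n x'' y t) x)
              + (1/2) * deriv (fun x'' => m x'' y t) x) := by
        have hconv : ∑ j ∈ Finset.Icc 1 n,
              (lam ^ ((j:ℤ) - (n:ℤ)) *
                  (lam * deriv (fun x'' => m x'' y t) x * (b j x y t + 1/2)
                    + lam * m x y t * deriv (fun x'' => b j x'' y t) x
                    - (1/2) * deriv (deriv (deriv (fun x'' => b j x'' y t))) x
                    + (1/4) * deriv (fun x'' => b j x'' y t) x
                    - (1/2) * deriv (fun x'' => m x'' y t) x)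
                + lam ^ ((j:ℤ) - (n:ℤ)) *
                  ((1 / 4 + lam * m x y t) * deriv (fun x'' => b j x'' y t) x))
            = ∑ i ∈ Finset.range n, (F (i + 1) - F i) := by
          rw [← Finset.Ico_add_one_right_eq_Icc, Finset.sum_Ico_eq_sum_range]
          show ∑ k ∈ Finset.range n, _ = _
          refine Finset.sum_congr rfl fun i hi => ?_
          have hi' : i < n := Finset.mem_range.mp hi
          have hmem : 1 + i ∈ Finset.Icc 1 n := Finset.mem_Icc.mpr ⟨by omega, by omega⟩
          rcases Nat.eq_zero_or_pos i with h0 | hpos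
          · subst h0
            have h1' := h1 x y t
            simp only [dX3] at h1'
            simp only [hF, if_pos rfl, Nat.zero_add, if_neg (Nat.one_ne_zero)]
            push_cast
            rw [show (2:ℤ) - (n:ℤ) = (1 - (n:ℤ)) + 1 by ring, zpow_add_one₀ hlam]
            linear_combination -(lam ^ ((1:ℤ) - (n:ℤ))) * h1'
          · have hrec' := hrec (1 + i) (by omega) (by omega) x y t
            simp only [dX3] at hrec'
            have : (1 + i - 1) = i := by omega
            rw [this] at hrec'
            have hiI : i ∈ Finset.Icc 1 n := Finset.mem_Icc.mpr ⟨by omega, by omega⟩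
            rw [hprod i hiI x] at hrec'
            simp only [hF, if_neg (by omega : ¬ 1 + i = 0), if_neg (by omega : ¬ i + 1 = 0),
              if_neg (by omega : ¬ i = 0)]
            push_cast
            rw [show (1:ℤ) + (i:ℤ) - (n:ℤ) = (i:ℤ) + 1 - (n:ℤ) by ring,
              show (i:ℤ) + 1 + 1 - (n:ℤ) = ((i:ℤ) + 1 - (n:ℤ)) + 1 by ring,
              zpow_add_one₀ hlam]
            simp only [Nat.add_comm 1 i] at hrec' ⊢
            linear_combination -(lam ^ ((i:ℤ) + 1 - (n:ℤ))) * hrec'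
        rw [hconv, Finset.sum_range_sub F n]
        simp only [hF, if_pos rfl, if_neg (by omega : ¬ n = 0), sub_zero]
        rw [show ((n:ℤ) + 1 - (n:ℤ)) = 1 by ring, zpow_one]
      have hadd := Finset.sum_add_distrib (s := Finset.Icc 1 n)
        (f := fun j => lam ^ ((j:ℤ) - (n:ℤ)) *
                (lam * deriv (fun x'' => m x'' y t) x * (b j x y t + 1/2)
                  + lam * m x y t * deriv (fun x'' => b j x'' y t) x
                  - (1/2) * deriv (deriv (deriv (fun x'' => b j x'' y t))) x
                  + (1/4) * deriv (fun x'' => b j x'' y t) x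
                  - (1/2) * deriv (fun x'' => m x'' y t) x))
        (g := fun j => lam ^ ((j:ℤ) - (n:ℤ)) *
                ((1 / 4 + lam * m x y t) * deriv (fun x'' => b j x'' y t) x))
      have hq : ∑ j ∈ Finset.Icc 1 n, lam ^ ((j:ℤ) - (n:ℤ)) *
              ((1 / 4 + lam * m x y t) * deriv (fun x'' => b j x'' y t) x)
          = (∑ j ∈ Finset.Icc 1 n,
              lam ^ ((j:ℤ) - (n:ℤ)) * (1 / 2 * deriv (fun x' => b j x' y t) x))
            * (1 / 4 + lam * m x y t)
            - (1 / 4 + lam * m x y t) *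
              ∑ j ∈ Finset.Icc 1 n,
                lam ^ ((j:ℤ) - (n:ℤ)) * (-(1 / 2) * deriv (fun x' => b j x' y t) x) := by
        rw [Finset.sum_mul, Finset.mul_sum, ← Finset.sum_sub_distrib]
        exact Finset.sum_congr rfl fun j hj => by ring
      rw [hadd, hq] at htel
      linear_combination lam * ht' - htel
    · -- (1,1)
      have eD : deriv (fun x' => ∑ j ∈ Finset.Icc 1 n,
            lam ^ ((j:ℤ) - (n:ℤ)) * (1 / 2 * deriv (fun x' => b j x' y t) x')) x
          = ∑ j ∈ Finset.Icc 1 n,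
            lam ^ ((j:ℤ) - (n:ℤ)) * (1 / 2 * deriv (deriv (fun x'' => b j x'' y t)) x) :=
        (HasDerivAt.fun_sum fun j hj =>
          (((hB1d j hj x).hasDerivAt.const_mul _).const_mul _)).deriv
      rw [eD]
      have h11 : (1 / 4 + lam * m x y t) * (∑ j ∈ Finset.Icc 1 n,
            lam ^ ((j:ℤ) - (n:ℤ)) * (b j x y t + 1 / 2 - 1 / (2 * lam)))
          = (∑ j ∈ Finset.Icc 1 n,
              lam ^ ((j:ℤ) - (n:ℤ)) *
                (lam * m x y t * (b j x y t + 1 / 2) -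
                      1 / 2 * deriv (fun x' => deriv (fun x' => b j x' y t) x') x +
                    1 / 4 * (b j x y t + 1 / 2) -
                  1 / 2 * m x y t -
                1 / (8 * lam)))
            + ∑ j ∈ Finset.Icc 1 n,
              lam ^ ((j:ℤ) - (n:ℤ)) * (1 / 2 * deriv (deriv (fun x'' => b j x'' y t)) x) := by
        rw [Finset.mul_sum, ← Finset.sum_add_distrib]
        refine Finset.sum_congr rfl fun j hj => ?_
        field_simp
        ring
      linear_combination h11
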